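/- arXiv:math/0302116 — 4 statements merged into one kernel-verified Lean document; each statement's English description precedes it below -/
import Mathlib

section
/- Let R be a Noetherian integral domain and let 0 → M₀ → M₁ → M₂ → 0 be a short exact sequence of R-modules. If M₁ is almost finitely generated, then both M₀ and M₂ are almost finitely generated. -/
/-- An `R`-module `M` is *almost trivial* if some nonzero `r : R` annihilates `M`. -/
def AlmostTrivial (R : Type*) (M : Type*) [CommRing R] [AddCommGroup M] [Module R M] : Prop :=
  ∃ r : R, r ≠ 0 ∧ ∀ m : M, r • m = 0

/-- An `R`-module `M` is *almost finitely generated* if its torsion submodule is almost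
trivial and the quotient `M/tors(M)` is a finitely generated `R`-module. -/
def AlmostFG (R : Type*) (M : Type*) [CommRing R] [AddCommGroup M] [Module R M] : Prop :=
  AlmostTrivial R (Submodule.torsion R M) ∧ Module.Finite R (M ⧸ Submodule.torsion R M)

theorem almostFG_of_ses
    {R M₀ M₁ M₂ : Type*} [CommRing R] [IsDomain R] [IsNoetherianRing R]
    [AddCommGroup M₀] [Module R M₀] [AddCommGroup M₁] [Module R M₁]
    [AddCommGroup M₂] [Module R M₂]
    (f : M₀ →ₗ[R] M₁) (g : M₁ →ₗ[R] M₂)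
    (hf : Function.Injective f) (hg : Function.Surjective g) (hfg : Function.Exact f g)
    (h₁ : AlmostFG R M₁) :
    AlmostFG R M₀ ∧ AlmostFG R M₂ := by
  obtain ⟨⟨r, hr0, hr⟩, hfin⟩ := h₁
  have hr' : ∀ m : M₁, m ∈ Submodule.torsion R M₁ → r • m = 0 := by
    intro m hm
    exact congrArg Subtype.val (hr ⟨m, hm⟩)
  set T₀ := Submodule.torsion R M₀ with hT₀def
  set T₁ := Submodule.torsion R M₁ with hT₁def
  set T₂ := Submodule.torsion R M₂ with hT₂def
  -- f maps torsion into torsion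
  have hle₀ : T₀ ≤ T₁.comap f := by
    intro m hm
    obtain ⟨a, ha⟩ := hm
    have ha' : (a : R) • m = 0 := ha
    exact ⟨a, show (a : R) • f m = 0 by rw [← map_smul, ha', map_zero]⟩
  have hle₂ : T₁ ≤ T₂.comap g := by
    intro m hm
    obtain ⟨a, ha⟩ := hm
    have ha' : (a : R) • m = 0 := ha
    exact ⟨a, show (a : R) • g m = 0 by rw [← map_smul, ha', map_zero]⟩
  haveI : IsNoetherian R (M₁ ⧸ T₁) := isNoetherian_of_isNoetherianRing_of_finite R _
  -- M₀ torsion almost trivial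
  have hat₀ : AlmostTrivial R T₀ := by
    refine ⟨r, hr0, fun m => ?_⟩
    have h1 : r • f m.1 = 0 := hr' _ (hle₀ m.2)
    have h2 : f (r • m.1) = 0 := by rw [map_smul, h1]
    refine Subtype.ext ?_
    show r • m.1 = 0
    exact hf (by rw [h2, map_zero])
  -- M₀ quotient finite
  have φ := Submodule.mapQ T₀ T₁ f hle₀
  have hinjφ : Function.Injective (Submodule.mapQ T₀ T₁ f hle₀) := by
    rw [← LinearMap.ker_eq_bot, eq_bot_iff]
    intro x hx
    obtain ⟨m, rfl⟩ := T₀.mkQ_surjective x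
    simp only [LinearMap.mem_ker, Submodule.mkQ_apply, Submodule.mapQ_apply] at hx
    have hm : f m ∈ T₁ := (Submodule.Quotient.mk_eq_zero T₁).mp hx
    obtain ⟨a, ha⟩ := hm
    have ha' : (a : R) • f m = 0 := ha
    have : f ((a : R) • m) = 0 := by rw [map_smul]; exact ha'
    have hm0 : (a : R) • m = 0 := hf (by rw [this, map_zero])
    have : m ∈ T₀ := ⟨a, hm0⟩
    simpa [Submodule.Quotient.mk_eq_zero] using (Submodule.Quotient.mk_eq_zero T₀).mpr this
  haveI : IsNoetherian R (M₀ ⧸ T₀) := isNoetherian_of_injective _ hinjφ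
  have hfin₀ : Module.Finite R (M₀ ⧸ T₀) := inferInstance
  -- M₂ quotient finite
  have hsurjψ : Function.Surjective (Submodule.mapQ T₁ T₂ g hle₂) := by
    intro z
    obtain ⟨m, rfl⟩ := T₂.mkQ_surjective z
    obtain ⟨y, rfl⟩ := hg m
    exact ⟨T₁.mkQ y, by simp [Submodule.mapQ_apply]⟩
  have hfin₂ : Module.Finite R (M₂ ⧸ T₂) := Module.Finite.of_surjective _ hsurjψ
  -- M₂ torsion almost trivial
  set N : Submodule R M₁ := T₂.comap g with hNdef
  set P : Submodule R (M₁ ⧸ T₁) := N.map T₁.mkQ with hPdef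
  obtain ⟨S, hS⟩ := IsNoetherian.noetherian P
  have hlift : ∀ p : S, ∃ y : M₁, y ∈ N ∧ T₁.mkQ y = (p : M₁ ⧸ T₁) := by
    intro p
    have hp : (p : M₁ ⧸ T₁) ∈ P := by
      rw [← hS]; exact Submodule.subset_span p.2
    obtain ⟨y, hy, hy2⟩ := hp
    exact ⟨y, hy, hy2⟩
  choose y hyN hym using hlift
  have htors : ∀ p : S, ∃ a : nonZeroDivisors R, (a : R) • g (y p) = 0 := by
    intro p
    obtain ⟨a, ha⟩ := hyN p
    exact ⟨a, ha⟩ 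
  choose a ha using htors
  set c : R := (∏ p : S, (a p : R)) * r with hcdef
  have hc0 : c ≠ 0 := by
    apply mul_ne_zero _ hr0
    rw [Finset.prod_ne_zero_iff]
    intro p _
    exact nonZeroDivisors.ne_zero (a p).2
  -- T₁ ≤ ker (c • g)
  have hkerT : T₁ ≤ LinearMap.ker (c • g) := by
    intro t ht
    simp only [LinearMap.mem_ker, LinearMap.smul_apply]
    rw [← map_smul, hcdef, mul_smul, hr' t ht, smul_zero, map_zero]
  -- generators in ker image
  have hgen : ∀ p : S, (p : M₁ ⧸ T₁) ∈ (LinearMap.ker (c • g)).map T₁.mkQ := by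
    intro p
    refine ⟨y p, ?_, hym p⟩
    show (c • g) (y p) = 0
    rw [LinearMap.smul_apply]
    obtain ⟨d, hd⟩ := Finset.dvd_prod_of_mem (fun q : S => (a q : R)) (Finset.mem_univ p)
    rw [hcdef, hd, mul_comm (a p : R) d, mul_assoc, mul_comm, mul_smul, mul_smul,
      smul_comm (a p : R) r, smul_comm (a p : R) d, ha p, smul_zero, smul_zero]
  have hPle : P ≤ (LinearMap.ker (c • g)).map T₁.mkQ := by
    rw [← hS, Submodule.span_le]
    intro x hx
    exact hgen ⟨x, hx⟩
  have hNker : N ≤ LinearMap.ker (c • g) := by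
    intro m hm
    have hmk : T₁.mkQ m ∈ P := ⟨m, hm, rfl⟩
    obtain ⟨w, hw, hwm⟩ := hPle hmk
    have : m - w ∈ T₁ := by
      rw [← Submodule.Quotient.mk_eq_zero (p := T₁)]
      simp only [Submodule.mkQ_apply] at hwm
      rw [Submodule.Quotient.mk_sub, hwm, sub_self]
    have h2 : m - w ∈ LinearMap.ker (c • g) := hkerT this
    have h3 : m = (m - w) + w := by abel
    rw [h3]
    exact (LinearMap.ker (c • g)).add_mem h2 hw
  have hat₂ : AlmostTrivial R T₂ := by
    refine ⟨c, hc0, fun x => ?_⟩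
    obtain ⟨y₀, hy₀⟩ := hg x.1
    have hyN₀ : y₀ ∈ N := by
      simp only [hNdef, Submodule.mem_comap, hy₀]; exact x.2
    have := hNker hyN₀
    simp only [LinearMap.mem_ker, LinearMap.smul_apply] at this
    ext
    show c • x.1 = 0
    rw [← hy₀, ← this]
  exact ⟨⟨hat₀, hfin₀⟩, ⟨hat₂, hfin₂⟩⟩
end

section
/- Let R be a Noetherian integral domain and let 0 → M₀ → M₁ → M₂ → 0 be a short exact sequence of R-modules. If M₀ and M₂ are almost finitely generated, then M₁ is almost finitely generated. -/
/-!
If `a` and `b` annihilate the torsion of `M₀` and `M₂`, then `a * b` annihilates that of `M₁`: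
for torsion `n`, `b • n` is the image of an element of `M₀`, which is torsion as `f` is injective.

For finiteness, let `K` be the kernel of the induced surjection `M₁/tors → M₂/tors`. Then `b • K`
lies in the image of the finitely generated module `M₀/tors`, which is Noetherian. Since `M₁/tors`
is torsion-free, `K ≅ b • K` is finitely generated, hence so is the extension `M₁/tors` of
`M₂/tors` by `K`.
-/

section

variable {R M N P : Type*} [CommRing R] [AddCommGroup M] [Module R M] [AddCommGroup N] [Module R N]
  [AddCommGroup P] [Module R P]

theorem almostTrivial_submodule_iff (K : Submodule R M) :
    AlmostTrivial R K ↔ ∃ r : R, r ≠ 0 ∧ ∀ x ∈ K, r • x = 0 := by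
  simp [AlmostTrivial, Subtype.ext_iff]

namespace Submodule

theorem fg_of_forall_smul_mem [IsNoetherianRing R] {K L : Submodule R M} (hL : L.FG) {r : R}
    (hr : IsSMulRegular M r) (hKL : ∀ x ∈ K, r • x ∈ L) : K.FG :=
  fg_of_fg_map_injective (DistribSMul.toLinearMap R M r) hr <| hL.of_le <|
    map_le_iff_le_comap.2 hKL

theorem le_comap_torsion (f : M →ₗ[R] N) : torsion R M ≤ (torsion R N).comap f := by
  rintro m ⟨a, ha⟩
  exact ⟨a, by rw [← LinearMap.map_smul_of_tower, ha, map_zero]⟩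

theorem comap_torsion_of_injective {f : M →ₗ[R] N} (hf : Function.Injective f) :
    (torsion R N).comap f = torsion R M := by
  refine le_antisymm ?_ (le_comap_torsion f)
  rintro m ⟨a, ha⟩
  exact ⟨a, hf <| by rw [LinearMap.map_smul_of_tower, ha, map_zero]⟩

def mapQTorsion (f : M →ₗ[R] N) : (M ⧸ torsion R M) →ₗ[R] N ⧸ torsion R N :=
  mapQ _ _ f (le_comap_torsion f)

@[simp]
theorem mapQTorsion_mk (f : M →ₗ[R] N) (m : M) :
    mapQTorsion f (Quotient.mk m) = Quotient.mk (f m) :=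
  rfl

theorem mapQTorsion_surjective {f : M →ₗ[R] N} (hf : Function.Surjective f) :
    Function.Surjective (mapQTorsion f) := by
  rintro ⟨n⟩
  obtain ⟨m, rfl⟩ := hf n
  exact ⟨Quotient.mk m, rfl⟩

end Submodule

variable {f : M →ₗ[R] N} {g : N →ₗ[R] P}

theorem almostTrivial_torsion_of_exact [IsDomain R] (hf : Function.Injective f)
    (hfg : Function.Exact f g) (hM : AlmostTrivial R (Submodule.torsion R M))
    (hP : AlmostTrivial R (Submodule.torsion R P)) :
    AlmostTrivial R (Submodule.torsion R N) := by
  obtain ⟨a, ha, haM⟩ := (almostTrivial_submodule_iff _).1 hM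
  obtain ⟨b, hb, hbP⟩ := (almostTrivial_submodule_iff _).1 hP
  refine (almostTrivial_submodule_iff _).2 ⟨a * b, mul_ne_zero ha hb, fun n hn ↦ ?_⟩
  have hgn : g (b • n) = 0 := by
    rw [map_smul, hbP _ (Submodule.le_comap_torsion g hn)]
  obtain ⟨m, hm⟩ := (hfg _).1 hgn
  have hm_tors : m ∈ Submodule.torsion R M := by
    rw [← Submodule.comap_torsion_of_injective hf, Submodule.mem_comap, hm]
    exact Submodule.smul_mem _ b hn
  rw [mul_smul, ← hm, ← map_smul, haM m hm_tors, map_zero]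

theorem finite_quotient_torsion_of_exact [IsDomain R] [IsNoetherianRing R]
    (hg : Function.Surjective g) (hfg : Function.Exact f g)
    [Module.Finite R (M ⧸ Submodule.torsion R M)] [Module.Finite R (P ⧸ Submodule.torsion R P)]
    (hP : AlmostTrivial R (Submodule.torsion R P)) :
    Module.Finite R (N ⧸ Submodule.torsion R N) := by
  obtain ⟨b, hb, hbP⟩ := (almostTrivial_submodule_iff _).1 hP
  have hker : ∀ x ∈ LinearMap.ker (Submodule.mapQTorsion g),
      b • x ∈ LinearMap.range (Submodule.mapQTorsion f) := by
    intro x hx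
    obtain ⟨n, rfl⟩ := Submodule.mkQ_surjective _ x
    have hgn : g (b • n) = 0 := by
      rw [map_smul, hbP _ ((Submodule.Quotient.mk_eq_zero _).1 hx)]
    obtain ⟨m, hm⟩ := (hfg _).1 hgn
    exact ⟨Submodule.Quotient.mk m, by simp [hm]⟩
  have : Module.Finite R (LinearMap.ker (Submodule.mapQTorsion g)) :=
    .of_fg <| Submodule.fg_of_forall_smul_mem (Submodule.fg_range _)
      (IsSMulRegular.of_ne_zero hb) hker
  exact .of_exact (LinearMap.exact_subtype_ker_map _) (Submodule.mapQTorsion_surjective hg)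

end

theorem almostFG_of_ses_middle
    {R M₀ M₁ M₂ : Type*} [CommRing R] [IsDomain R] [IsNoetherianRing R]
    [AddCommGroup M₀] [Module R M₀] [AddCommGroup M₁] [Module R M₁]
    [AddCommGroup M₂] [Module R M₂]
    (f : M₀ →ₗ[R] M₁) (g : M₁ →ₗ[R] M₂)
    (hf : Function.Injective f) (hg : Function.Surjective g) (hfg : Function.Exact f g)
    (h₀ : AlmostFG R M₀) (h₂ : AlmostFG R M₂) :
    AlmostFG R M₁ := by
  have := h₀.2
  have := h₂.2
  exact ⟨almostTrivial_torsion_of_exact hf hfg h₀.1 h₂.1,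
    finite_quotient_torsion_of_exact hg hfg h₂.1⟩
end

section
/- Five-Lemma for almost isomorphisms: given a commutative diagram of R-modules with exact rows A₁ → A₂ → A₃ → A₄ → A₅ and B₁ → B₂ → B₃ → B₄ → B₅ connected by vertical maps fᵢ : Aᵢ → Bᵢ, if f₁, f₂, f₄, f₅ are almost isomorphisms then f₃ is an almost isomorphism. -/
/-- A homomorphism of `R`-modules is an *almost isomorphism* if its kernel and cokernel
are almost trivial. -/
def AlmostIso {R M N : Type*} [CommRing R] [AddCommGroup M] [Module R M]
    [AddCommGroup N] [Module R N] (f : M →ₗ[R] N) : Prop :=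
  AlmostTrivial R (LinearMap.ker f) ∧ AlmostTrivial R (N ⧸ LinearMap.range f)

theorem five_lemma_almostIso
    {R A₁ A₂ A₃ A₄ A₅ B₁ B₂ B₃ B₄ B₅ : Type*} [CommRing R] [IsDomain R]
    [AddCommGroup A₁] [Module R A₁] [AddCommGroup A₂] [Module R A₂]
    [AddCommGroup A₃] [Module R A₃] [AddCommGroup A₄] [Module R A₄]
    [AddCommGroup A₅] [Module R A₅]
    [AddCommGroup B₁] [Module R B₁] [AddCommGroup B₂] [Module R B₂]
    [AddCommGroup B₃] [Module R B₃] [AddCommGroup B₄] [Module R B₄]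
    [AddCommGroup B₅] [Module R B₅]
    (a₁ : A₁ →ₗ[R] A₂) (a₂ : A₂ →ₗ[R] A₃) (a₃ : A₃ →ₗ[R] A₄) (a₄ : A₄ →ₗ[R] A₅)
    (b₁ : B₁ →ₗ[R] B₂) (b₂ : B₂ →ₗ[R] B₃) (b₃ : B₃ →ₗ[R] B₄) (b₄ : B₄ →ₗ[R] B₅)
    (f₁ : A₁ →ₗ[R] B₁) (f₂ : A₂ →ₗ[R] B₂) (f₃ : A₃ →ₗ[R] B₃)
    (f₄ : A₄ →ₗ[R] B₄) (f₅ : A₅ →ₗ[R] B₅)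
    (hexA₁ : Function.Exact a₁ a₂) (hexA₂ : Function.Exact a₂ a₃)
    (hexA₃ : Function.Exact a₃ a₄)
    (hexB₁ : Function.Exact b₁ b₂) (hexB₂ : Function.Exact b₂ b₃)
    (hexB₃ : Function.Exact b₃ b₄)
    (hc₁ : b₁ ∘ₗ f₁ = f₂ ∘ₗ a₁) (hc₂ : b₂ ∘ₗ f₂ = f₃ ∘ₗ a₂)
    (hc₃ : b₃ ∘ₗ f₃ = f₄ ∘ₗ a₃) (hc₄ : b₄ ∘ₗ f₄ = f₅ ∘ₗ a₄)
    (h₁ : AlmostIso f₁) (h₂ : AlmostIso f₂) (h₄ : AlmostIso f₄) (h₅ : AlmostIso f₅) :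
    AlmostIso f₃ := by
  obtain ⟨⟨rk₂, hrk₂, hk₂⟩, ⟨sc₂, hsc₂, hcok₂⟩⟩ := h₂
  obtain ⟨_, ⟨sc₁, hsc₁, hcok₁⟩⟩ := h₁
  obtain ⟨⟨rk₄, hrk₄, hk₄⟩, ⟨sc₄, hsc₄, hcok₄⟩⟩ := h₄
  obtain ⟨⟨rk₅, hrk₅, hk₅⟩, _⟩ := h₅
  -- pointwise commutativity
  have pc₁ : ∀ x, b₁ (f₁ x) = f₂ (a₁ x) := fun x => LinearMap.congr_fun hc₁ x
  have pc₂ : ∀ x, b₂ (f₂ x) = f₃ (a₂ x) := fun x => LinearMap.congr_fun hc₂ x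
  have pc₃ : ∀ x, b₃ (f₃ x) = f₄ (a₃ x) := fun x => LinearMap.congr_fun hc₃ x
  have pc₄ : ∀ x, b₄ (f₄ x) = f₅ (a₄ x) := fun x => LinearMap.congr_fun hc₄ x
  -- kernel helpers
  have ker₂ : ∀ x : A₂, f₂ x = 0 → rk₂ • x = 0 := fun x hx => by
    have := hk₂ ⟨x, (LinearMap.mem_ker).mpr hx⟩
    exact congrArg Subtype.val this
  have ker₄ : ∀ x : A₄, f₄ x = 0 → rk₄ • x = 0 := fun x hx => by
    have := hk₄ ⟨x, (LinearMap.mem_ker).mpr hx⟩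
    exact congrArg Subtype.val this
  have ker₅ : ∀ x : A₅, f₅ x = 0 → rk₅ • x = 0 := fun x hx => by
    have := hk₅ ⟨x, (LinearMap.mem_ker).mpr hx⟩
    exact congrArg Subtype.val this
  -- cokernel helpers
  have cok₁ : ∀ z : B₁, ∃ w, f₁ w = sc₁ • z := fun z => by
    have := hcok₁ (Submodule.Quotient.mk z)
    rw [← Submodule.Quotient.mk_smul, Submodule.Quotient.mk_eq_zero] at this
    exact this
  have cok₂ : ∀ z : B₂, ∃ w, f₂ w = sc₂ • z := fun z => by
    have := hcok₂ (Submodule.Quotient.mk z)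
    rw [← Submodule.Quotient.mk_smul, Submodule.Quotient.mk_eq_zero] at this
    exact this
  have cok₄ : ∀ z : B₄, ∃ w, f₄ w = sc₄ • z := fun z => by
    have := hcok₄ (Submodule.Quotient.mk z)
    rw [← Submodule.Quotient.mk_smul, Submodule.Quotient.mk_eq_zero] at this
    exact this
  constructor
  · -- kernel of f₃ is killed by rk₂ * sc₁ * rk₄
    refine ⟨rk₂ * sc₁ * rk₄, mul_ne_zero (mul_ne_zero hrk₂ hsc₁) hrk₄, ?_⟩
    rintro ⟨x, hx⟩
    rw [LinearMap.mem_ker] at hx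
    ext
    show (rk₂ * sc₁ * rk₄) • x = 0
    -- f₄ (a₃ x) = 0
    have h4 : f₄ (a₃ x) = 0 := by rw [← pc₃, hx, map_zero]
    have h4' : a₃ (rk₄ • x) = 0 := by rw [map_smul]; exact ker₄ _ h4
    obtain ⟨y, hy⟩ := (hexA₂ (rk₄ • x)).mp h4'
    -- f₂ y ∈ ker b₂
    have hb2 : b₂ (f₂ y) = 0 := by
      rw [pc₂, hy, map_smul, hx, smul_zero]
    obtain ⟨z, hz⟩ := (hexB₁ (f₂ y)).mp hb2
    obtain ⟨w, hw⟩ := cok₁ z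
    have hfw : f₂ (a₁ w) = f₂ (sc₁ • y) := by
      rw [← pc₁, hw, map_smul, map_smul, hz]
    have hker : f₂ (sc₁ • y - a₁ w) = 0 := by
      rw [map_sub, hfw, sub_self]
    have h0 : rk₂ • (sc₁ • y - a₁ w) = 0 := ker₂ _ hker
    have ha2 : a₂ (rk₂ • (sc₁ • y)) = 0 := by
      have : rk₂ • (sc₁ • y) = rk₂ • (sc₁ • y - a₁ w) + a₁ (rk₂ • w) := by
        rw [map_smul, smul_sub]; abel
      rw [this, map_add, h0, map_zero, hexA₁.apply_apply_eq_zero, zero_add]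
    calc (rk₂ * sc₁ * rk₄) • x = rk₂ • sc₁ • rk₄ • x := by
          rw [smul_smul, smul_smul]
      _ = a₂ (rk₂ • (sc₁ • y)) := by rw [← hy, map_smul, map_smul]
      _ = 0 := ha2
  · -- cokernel of f₃ is killed by sc₂ * rk₅ * sc₄
    refine ⟨sc₂ * rk₅ * sc₄, mul_ne_zero (mul_ne_zero hsc₂ hrk₅) hsc₄, ?_⟩
    intro m
    obtain ⟨b, rfl⟩ := Submodule.Quotient.mk_surjective _ m
    rw [← Submodule.Quotient.mk_smul, Submodule.Quotient.mk_eq_zero]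
    obtain ⟨p, hp⟩ := cok₄ (b₃ b)
    have h5 : f₅ (a₄ p) = 0 := by
      rw [← pc₄, hp, map_smul, hexB₃.apply_apply_eq_zero, smul_zero]
    have h5' : a₄ (rk₅ • p) = 0 := by rw [map_smul]; exact ker₅ _ h5
    obtain ⟨q, hq⟩ := (hexA₃ (rk₅ • p)).mp h5'
    have hb3 : b₃ (rk₅ • sc₄ • b - f₃ q) = 0 := by
      rw [map_sub, pc₃, hq, map_smul, map_smul, map_smul, hp, smul_comm, sub_self]
    obtain ⟨c, hcz⟩ := (hexB₂ _).mp hb3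
    obtain ⟨d, hd⟩ := cok₂ c
    refine ⟨sc₂ • q + a₂ d, ?_⟩
    have : f₃ (a₂ d) = sc₂ • b₂ c := by rw [← pc₂, hd, map_smul]
    rw [map_add, map_smul, this, hcz, smul_sub, smul_smul, smul_smul]
    ring_nf
    abel
end

section
/- Let R be an integral domain, let C be an almost trivial R-module, and suppose 0 → M → K → C → 0 is an exact sequence of R-modules where K is torsion-free and M is finitely generated. Then K is isomorphic to a submodule of M; in particular if R is Noetherian then K is finitely generated. -/
theorem embeds_of_almostTrivial_cokernel
    {R M K C : Type*} [CommRing R] [IsDomain R]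
    [AddCommGroup M] [Module R M] [AddCommGroup K] [Module R K]
    [AddCommGroup C] [Module R C]
    (f : M →ₗ[R] K) (g : K →ₗ[R] C)
    (hf : Function.Injective f) (hg : Function.Surjective g) (hfg : Function.Exact f g)
    (hC : AlmostTrivial R C)
    (hK : NoZeroSMulDivisors R K)
    (hM : Module.Finite R M) :
    (∃ φ : K →ₗ[R] M, Function.Injective φ) ∧
      (IsNoetherianRing R → Module.Finite R K) := by
  obtain ⟨r, hr, hrC⟩ := hC
  have hmem : ∀ k : K, r • k ∈ LinearMap.range f := by
    intro k
    have : g (r • k) = 0 := by rw [map_smul, hrC]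
    exact ((hfg (r • k)).mp this)
  let ψ : K →ₗ[R] LinearMap.range f :=
    { toFun := fun k => ⟨r • k, hmem k⟩
      map_add' := fun a b => by simp [smul_add]
      map_smul' := fun c a => by
        ext; simp [smul_comm r c a] }
  let e : M ≃ₗ[R] LinearMap.range f := LinearEquiv.ofInjective f hf
  refine ⟨⟨e.symm.toLinearMap.comp ψ, ?_⟩, ?_⟩
  · intro a b hab
    have : ψ a = ψ b := e.symm.injective hab
    have h2 : r • a = r • b := congrArg Subtype.val this
    have : r • (a - b) = 0 := by rw [smul_sub, h2, sub_self]
    rcases smul_eq_zero.mp this with h | h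
    · exact absurd h hr
    · exact sub_eq_zero.mp h
  · intro hN
    obtain ⟨φ, hφ⟩ : ∃ φ : K →ₗ[R] M, Function.Injective φ :=
      ⟨e.symm.toLinearMap.comp ψ, fun a b hab => by
        have : ψ a = ψ b := e.symm.injective hab
        have h2 : r • a = r • b := congrArg Subtype.val this
        have : r • (a - b) = 0 := by rw [smul_sub, h2, sub_self]
        rcases smul_eq_zero.mp this with h | h
        · exact absurd h hr
        · exact sub_eq_zero.mp h⟩
    haveI : IsNoetherian R M := isNoetherian_of_isNoetherianRing_of_finite R M
    haveI : IsNoetherian R K := isNoetherian_of_injective φ hφ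
    exact Module.Finite.of_injective (LinearMap.id : K →ₗ[R] K) fun a b h => h
end
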